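/- For any two probability measures P and Q on a measurable space X with P absolutely continuous with respect to Q, the Kullback-Leibler divergence satisfies the Donsker-Varadhan variational formula: D_KL(P‖Q) = sup over bounded measurable functions f : X → ℝ of (E_P[f] − log E_Q[exp(f)]). -/
import Mathlib


open MeasureTheory

open Filter Topology

namespace DVaux

/-- Fenchel-Young inequality for `x log x`. -/
lemma fenchel {a b : ℝ} (ha : 0 ≤ a) : a * b ≤ a * Real.log a - a + Real.exp b := by
  rcases eq_or_lt_of_le ha with h | h
  · simp only [← h, zero_mul, sub_zero, zero_add, zero_sub, neg_zero]
    positivity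
  · have h1 : b - Real.log a + 1 ≤ Real.exp (b - Real.log a) := Real.add_one_le_exp _
    have h2 : a * (b - Real.log a + 1) ≤ a * Real.exp (b - Real.log a) :=
      mul_le_mul_of_nonneg_left h1 ha
    have h3 : a * Real.exp (b - Real.log a) = Real.exp b := by
      rw [Real.exp_sub, Real.exp_log h]
      field_simp
    nlinarith [h2, h3]

/-- `t * (log t)⁻ ≤ 2` for `t ≥ 0`. -/
lemma neg_log_bound {t : ℝ} (ht : 0 ≤ t) : t * max (-Real.log t) 0 ≤ 2 := by
  rcases le_or_gt (-Real.log t) 0 with h | h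
  · rw [max_eq_right h]
    norm_num
  · rw [max_eq_left h.le]
    have ht1 : t < 1 := by
      rcases eq_or_lt_of_le ht with h0 | h0
      · simp [← h0] at h
      · by_contra hc
        push_neg at hc
        have := Real.log_nonneg hc
        linarith
    rcases eq_or_lt_of_le ht with h0 | h0
    · simp [← h0]
    have hs : 0 < Real.sqrt t := Real.sqrt_pos.mpr h0
    have h1 : Real.log (Real.sqrt t)⁻¹ ≤ (Real.sqrt t)⁻¹ - 1 :=
      Real.log_le_sub_one_of_pos (by positivity)
    have h2 : -Real.log t = 2 * Real.log (Real.sqrt t)⁻¹ := by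
      rw [Real.log_inv, Real.log_sqrt ht]
      ring
    have h3 : -Real.log t ≤ 2 * (Real.sqrt t)⁻¹ := by
      rw [h2]; nlinarith
    have h4 : t * (-Real.log t) ≤ t * (2 * (Real.sqrt t)⁻¹) :=
      mul_le_mul_of_nonneg_left h3 ht
    have h5 : t * (2 * (Real.sqrt t)⁻¹) = 2 * Real.sqrt t := by
      field_simp
      nlinarith [Real.sq_sqrt ht, Real.sqrt_nonneg t]
    have h6 : Real.sqrt t ≤ 1 := by
      rw [show (1:ℝ) = Real.sqrt 1 by simp]
      exact Real.sqrt_le_sqrt ht1.le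
    linarith

/-- The truncation is dominated: `|max (-n) (min n t)| ≤ |t|` for `n ≥ 0`. -/
lemma abs_clamp_le {n t : ℝ} (hn : 0 ≤ n) : |max (-n) (min n t)| ≤ |t| := by
  rcases le_total t 0 with h | h
  · rw [min_eq_right (h.trans hn), abs_le]
    refine ⟨?_, ?_⟩
    · have : -|t| = t := by rw [abs_of_nonpos h]; ring
      rw [this]; exact le_max_right _ _
    · exact max_le (by linarith [abs_nonneg t]) (le_abs_self t)
  · have h1 : 0 ≤ min n t := le_min hn h
    rw [max_eq_right (by linarith), abs_of_nonneg h1, abs_of_nonneg h]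
    exact min_le_right _ _

/-- Lower bound for the truncation. -/
lemma clamp_ge {n t : ℝ} (hn : 0 ≤ n) :
    min n (max t 0) - max (-t) 0 ≤ max (-n) (min n t) := by
  rcases le_total t 0 with h | h
  · rw [max_eq_right h, min_eq_right hn, max_eq_left (by linarith)]
    have : min n t = t := min_eq_right (h.trans hn)
    calc 0 - (-t) = t := by ring
    _ = min n t := this.symm
    _ ≤ max (-n) (min n t) := le_max_right _ _
  · rw [max_eq_left h, max_eq_right (by linarith)]
    simp only [sub_zero]; exact le_max_right (-n) (min n t)



lemma upper {X : Type*} [MeasurableSpace X] (P Q : Measure X)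
    [IsProbabilityMeasure P] [IsProbabilityMeasure Q] (hPQ : P ≪ Q)
    (hL : Integrable (fun x => Real.log (P.rnDeriv Q x).toReal) P)
    (f : X → ℝ) (hf : Measurable f) (C : ℝ) (hC : ∀ x, |f x| ≤ C) :
    ∫ x, f x ∂P - Real.log (∫ x, Real.exp (f x) ∂Q)
      ≤ ∫ x, Real.log (P.rnDeriv Q x).toReal ∂P := by
  set g : X → ℝ := fun x => (P.rnDeriv Q x).toReal with hgdef
  set L : X → ℝ := fun x => Real.log (g x) with hLdef
  have hgmeas : Measurable g := (Measure.measurable_rnDeriv P Q).ennreal_toReal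
  have hLmeas : Measurable L := Real.measurable_log.comp hgmeas
  have hgnn : ∀ x, 0 ≤ g x := fun x => ENNReal.toReal_nonneg
  have hef_int : Integrable (fun x => Real.exp (f x)) Q := by
    refine (integrable_const (Real.exp C)).mono'
      (Real.measurable_exp.comp hf).aestronglyMeasurable ?_
    refine Eventually.of_forall fun x => ?_
    rw [Real.norm_eq_abs, Real.abs_exp]
    exact Real.exp_le_exp.mpr (le_of_abs_le (hC x))
  set S := ∫ x, Real.exp (f x) ∂Q with hSdef
  have hS_ge : Real.exp (-C) ≤ S := by
    have h1 : Real.exp (-C) = ∫ _x, Real.exp (-C) ∂Q := by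
      simp [measure_univ]
    rw [h1]
    exact integral_mono (integrable_const _) hef_int
      (fun x => Real.exp_le_exp.mpr (neg_le_of_abs_le (hC x)))
  have hS_pos : 0 < S := lt_of_lt_of_le (Real.exp_pos _) hS_ge
  set h : X → ℝ := fun x => f x - Real.log S with hhdef
  have hh_meas : Measurable h := hf.sub measurable_const
  have hh_bdd : ∀ x, |h x| ≤ C + |Real.log S| := fun x =>
    (abs_sub (f x) (Real.log S)).trans (add_le_add (hC x) le_rfl)
  -- pointwise Fenchel
  have hpt : ∀ x, g x * h x ≤ g x * L x - g x + Real.exp (h x) := fun x => fenchel (hgnn x)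
  -- integrability
  have I3 : Integrable g Q := Measure.integrable_toReal_rnDeriv
  have I1 : Integrable (fun x => g x * h x) Q := by
    refine (I3.const_mul (C + |Real.log S|)).mono'
      (hgmeas.mul hh_meas).aestronglyMeasurable ?_
    refine Eventually.of_forall fun x => ?_
    rw [Real.norm_eq_abs, abs_mul, abs_of_nonneg (hgnn x), mul_comm (C + |Real.log S|)]
    exact mul_le_mul_of_nonneg_left (hh_bdd x) (hgnn x)
  have I2 : Integrable (fun x => g x * L x) Q := by
    have := (integrable_rnDeriv_smul_iff (f := L) hPQ).mpr hL
    simpa [smul_eq_mul] using this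
  have I4 : Integrable (fun x => Real.exp (h x)) Q := by
    refine (integrable_const (Real.exp (C + |Real.log S|))).mono'
      (Real.measurable_exp.comp hh_meas).aestronglyMeasurable ?_
    refine Eventually.of_forall fun x => ?_
    rw [Real.norm_eq_abs, Real.abs_exp]
    exact Real.exp_le_exp.mpr (le_of_abs_le (hh_bdd x))
  have key : ∫ x, g x * h x ∂Q ≤ ∫ x, (g x * L x - g x + Real.exp (h x)) ∂Q :=
    integral_mono I1 ((I2.sub I3).add I4) hpt
  -- compute LHS
  have hf_int : Integrable f P := by
    refine (integrable_const C).mono' hf.aestronglyMeasurable ?_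
    exact Eventually.of_forall fun x => (Real.norm_eq_abs _).le.trans_eq' rfl |>.trans (hC x)
  have hLHS : ∫ x, g x * h x ∂Q = ∫ x, f x ∂P - Real.log S := by
    have h1 : ∫ x, g x * h x ∂Q = ∫ x, h x ∂P := by
      have := integral_rnDeriv_smul (f := h) hPQ
      simpa [smul_eq_mul] using this
    rw [h1, hhdef]
    rw [integral_sub hf_int (integrable_const _), integral_const]
    simp [measure_univ]
  -- compute RHS
  have hgL : ∫ x, g x * L x ∂Q = ∫ x, L x ∂P := by
    have := integral_rnDeriv_smul (f := L) hPQ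
    simpa [smul_eq_mul] using this
  have hg1 : ∫ x, g x ∂Q = 1 := by
    rw [hgdef]
    rw [Measure.integral_toReal_rnDeriv hPQ]
    simp [measure_univ]
  have heh : ∫ x, Real.exp (h x) ∂Q = 1 := by
    have h1 : (fun x => Real.exp (h x)) = fun x => Real.exp (f x) / S := by
      funext x
      rw [hhdef]
      rw [Real.exp_sub, Real.exp_log hS_pos]
    rw [h1, integral_div, ← hSdef, div_self hS_pos.ne']
  have I23 : Integrable (fun x => g x * L x - g x) Q := I2.sub I3
  have hRHS : ∫ x, (g x * L x - g x + Real.exp (h x)) ∂Q = ∫ x, L x ∂P := by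
    rw [integral_add I23 I4, integral_sub I2 I3, hgL, hg1, heh]
    ring
  rw [hLHS, hRHS] at key
  exact key

end DVaux
open MeasureTheory Filter in

/-- The Kullback-Leibler divergence `D_KL(P‖Q) = E_P[log dP/dQ]` (as a real number). -/
noncomputable def klDivR {X : Type*} [MeasurableSpace X] (P Q : Measure X) : ℝ :=
  ∫ x, Real.log (P.rnDeriv Q x).toReal ∂P

open DVaux in
/-- **Donsker-Varadhan variational formula**: for probability measures `P ≪ Q` on a
standard Borel space, `D_KL(P‖Q)` equals the supremum over bounded measurable functions
`f` of `E_P[f] - log E_Q[exp f]`. -/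
theorem donsker_varadhan_formula {X : Type*} [MeasurableSpace X] [StandardBorelSpace X]
    (P Q : Measure X) [IsProbabilityMeasure P] [IsProbabilityMeasure Q] (hPQ : P ≪ Q) :
    klDivR P Q =
      ⨆ f : {f : X → ℝ // Measurable f ∧ ∃ C, ∀ x, |f x| ≤ C},
        (∫ x, f.1 x ∂P - Real.log (∫ x, Real.exp (f.1 x) ∂Q)) := by
  set g : X → ℝ := fun x => (P.rnDeriv Q x).toReal with hgdef
  set L : X → ℝ := fun x => Real.log (g x) with hLdef
  have hgmeas : Measurable g := (Measure.measurable_rnDeriv P Q).ennreal_toReal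
  have hLmeas : Measurable L := Real.measurable_log.comp hgmeas
  have hgnn : ∀ x, 0 ≤ g x := fun x => ENNReal.toReal_nonneg
  have I3 : Integrable g Q := Measure.integrable_toReal_rnDeriv
  have hg1 : ∫ x, g x ∂Q = 1 := by
    rw [hgdef, Measure.integral_toReal_rnDeriv hPQ]
    simp [measure_univ]
  have hKL : klDivR P Q = ∫ x, L x ∂P := rfl
  -- the truncated sequence
  set fn : ℕ → X → ℝ :=
    fun n x => if P.rnDeriv Q x = 0 then -(n:ℝ) else max (-(n:ℝ)) (min (n:ℝ) (L x)) with hfndef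
  have hcond : MeasurableSet {x | P.rnDeriv Q x = 0} :=
    Measure.measurable_rnDeriv P Q (measurableSet_singleton 0)
  have hfn_meas : ∀ n, Measurable (fn n) := fun n =>
    Measurable.ite hcond measurable_const
      (measurable_const.max (measurable_const.min hLmeas))
  have hfn_bdd : ∀ n : ℕ, ∀ x, |fn n x| ≤ (n:ℝ) := by
    intro n x
    rw [hfndef]
    dsimp only
    split_ifs with h
    · rw [abs_neg, Nat.abs_cast]
    · rw [abs_le]
      constructor
      · exact le_max_left _ _
      · exact max_le (by linarith [Nat.cast_nonneg (α := ℝ) n]) (min_le_left _ _)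
  have hP_pos : ∀ᵐ x ∂P, 0 < P.rnDeriv Q x := Measure.rnDeriv_pos hPQ
  have hfneq : ∀ n : ℕ, fn n =ᵐ[P] fun x => max (-(n:ℝ)) (min (n:ℝ) (L x)) := by
    intro n
    filter_upwards [hP_pos] with x hx
    rw [hfndef]
    exact if_neg hx.ne'
  have hev_eq : ∀ x, P.rnDeriv Q x ≠ 0 → ∀ᶠ n : ℕ in atTop, fn n x = L x := by
    intro x hx
    filter_upwards [eventually_ge_atTop ⌈|L x|⌉₊] with n hn
    have hn' : |L x| ≤ (n:ℝ) := Nat.ceil_le.mp hn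
    have h1 : L x ≤ (n:ℝ) := (le_abs_self _).trans hn'
    have h2 : -(n:ℝ) ≤ L x := by
      have := neg_abs_le (L x); linarith
    rw [hfndef]
    dsimp only
    rw [if_neg hx, min_eq_right h1, max_eq_right h2]
  have hexp_bdd : ∀ (n : ℕ) x, Real.exp (fn n x) ≤ g x + 1 := by
    intro n x
    have hexpL : Real.exp (L x) ≤ g x + 1 := by
      rcases (hgnn x).eq_or_lt with h0 | h0
      · rw [hLdef]; dsimp only; rw [← h0, Real.log_zero, Real.exp_zero]; linarith
      · rw [hLdef]; dsimp only; rw [Real.exp_log h0]; linarith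
    rw [hfndef]
    dsimp only
    split_ifs with h
    · calc Real.exp (-(n:ℝ)) ≤ Real.exp 0 := Real.exp_le_exp.mpr (by
        simp [Nat.cast_nonneg])
      _ = 1 := Real.exp_zero
      _ ≤ g x + 1 := by linarith [hgnn x]
    · have h1 : max (-(n:ℝ)) (min (n:ℝ) (L x)) ≤ max (L x) 0 :=
        max_le (le_max_of_le_right (by simp [Nat.cast_nonneg]))
          (le_max_of_le_left (min_le_right _ _))
      calc Real.exp (max (-(n:ℝ)) (min (n:ℝ) (L x))) ≤ Real.exp (max (L x) 0) :=
            Real.exp_le_exp.mpr h1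
      _ = max (Real.exp (L x)) (Real.exp 0) := Real.exp_monotone.map_max
      _ ≤ g x + 1 := max_le hexpL (by rw [Real.exp_zero]; linarith [hgnn x])
  have hexp_int : ∀ n : ℕ, Integrable (fun x => Real.exp (fn n x)) Q := by
    intro n
    refine (I3.add (integrable_const 1)).mono'
      (Real.measurable_exp.comp (hfn_meas n)).aestronglyMeasurable ?_
    refine Eventually.of_forall fun x => ?_
    rw [Real.norm_eq_abs, Real.abs_exp]
    exact hexp_bdd n x
  have hexp_pos : ∀ n : ℕ, 0 < ∫ x, Real.exp (fn n x) ∂Q := by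
    intro n
    have h1 : Real.exp (-(n:ℝ)) = ∫ _x, Real.exp (-(n:ℝ)) ∂Q := by simp [measure_univ]
    have h2 : Real.exp (-(n:ℝ)) ≤ ∫ x, Real.exp (fn n x) ∂Q := by
      rw [h1]
      refine integral_mono (integrable_const _) (hexp_int n) fun x => ?_
      exact Real.exp_le_exp.mpr (neg_le_of_abs_le (hfn_bdd n x))
    exact lt_of_lt_of_le (Real.exp_pos _) h2
  have hexp_le2 : ∀ n : ℕ, ∫ x, Real.exp (fn n x) ∂Q ≤ 2 := by
    intro n
    calc ∫ x, Real.exp (fn n x) ∂Q ≤ ∫ x, (g x + 1) ∂Q :=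
          integral_mono (hexp_int n) (I3.add (integrable_const 1)) (hexp_bdd n)
    _ = 2 := by
        rw [integral_add I3 (integrable_const 1), hg1, integral_const]
        norm_num [measure_univ]
  have hclamp_int : ∀ n : ℕ, Integrable (fun x => max (-(n:ℝ)) (min (n:ℝ) (L x))) P := by
    intro n
    refine (integrable_const ((n:ℝ))).mono'
      ((measurable_const.max (measurable_const.min hLmeas))).aestronglyMeasurable ?_
    filter_upwards [hfneq n] with x hx
    rw [← hx, Real.norm_eq_abs]
    exact hfn_bdd n x
  have hfn_int : ∀ n : ℕ, Integrable (fn n) P := fun n =>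
    (hclamp_int n).congr (hfneq n).symm
  haveI : Nonempty {f : X → ℝ // Measurable f ∧ ∃ C, ∀ x, |f x| ≤ C} :=
    ⟨⟨0, measurable_const, 0, fun x => by simp⟩⟩
  rw [hKL]
  by_cases hL : Integrable L P
  · -- finite KL case
    have hub : ∀ f : {f : X → ℝ // Measurable f ∧ ∃ C, ∀ x, |f x| ≤ C},
        (∫ x, f.1 x ∂P - Real.log (∫ x, Real.exp (f.1 x) ∂Q)) ≤ ∫ x, L x ∂P := by
      rintro ⟨f, hf, C, hC⟩
      exact upper P Q hPQ hL f hf C hC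
    have hbdd : BddAbove (Set.range fun f : {f : X → ℝ // Measurable f ∧ ∃ C, ∀ x, |f x| ≤ C} =>
        (∫ x, f.1 x ∂P - Real.log (∫ x, Real.exp (f.1 x) ∂Q))) := by
      refine ⟨∫ x, L x ∂P, ?_⟩
      rintro y ⟨f, rfl⟩
      exact hub f
    refine le_antisymm ?_ (ciSup_le hub)
    -- convergence of E_P[fn n]
    have tendP : Tendsto (fun n : ℕ => ∫ x, fn n x ∂P) atTop (𝓝 (∫ x, L x ∂P)) := by
      refine tendsto_integral_of_dominated_convergence (fun x => |L x|)
        (fun n => (hfn_meas n).aestronglyMeasurable) hL.abs ?_ ?_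
      · intro n
        filter_upwards [hP_pos] with x hx
        rw [Real.norm_eq_abs, hfndef]
        dsimp only
        rw [if_neg hx.ne']
        exact abs_clamp_le (Nat.cast_nonneg n)
      · filter_upwards [hP_pos] with x hx
        exact Tendsto.congr' ((hev_eq x hx.ne').mono fun n h => h.symm) tendsto_const_nhds
    -- convergence of E_Q[exp (fn n)]
    have tendQ : Tendsto (fun n : ℕ => ∫ x, Real.exp (fn n x) ∂Q) atTop (𝓝 1) := by
      rw [← hg1]
      refine tendsto_integral_of_dominated_convergence (fun x => g x + 1)
        (fun n => (Real.measurable_exp.comp (hfn_meas n)).aestronglyMeasurable)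
        (I3.add (integrable_const 1)) ?_ ?_
      · intro n
        refine Eventually.of_forall fun x => ?_
        rw [Real.norm_eq_abs, Real.abs_exp]
        exact hexp_bdd n x
      · filter_upwards [Measure.rnDeriv_lt_top P Q] with x hx
        rcases eq_or_ne (P.rnDeriv Q x) 0 with h0 | h0
        · have hgx : g x = 0 := by rw [hgdef]; simp [h0]
          rw [hgx]
          have heq : ∀ n : ℕ, Real.exp (fn n x) = Real.exp (-(n:ℝ)) := by
            intro n; rw [hfndef]; dsimp only; rw [if_pos h0]
          simp only [heq]
          exact Real.tendsto_exp_atBot.comp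
            (tendsto_neg_atTop_atBot.comp tendsto_natCast_atTop_atTop)
        · have hgx : 0 < g x := ENNReal.toReal_pos h0 hx.ne
          have hev : ∀ᶠ n : ℕ in atTop, Real.exp (fn n x) = g x := by
            filter_upwards [hev_eq x h0] with n hn
            rw [hn, hLdef]
            exact Real.exp_log hgx
          exact Tendsto.congr' (hev.mono fun n h => h.symm) tendsto_const_nhds
    have tt : Tendsto (fun n : ℕ => ∫ x, fn n x ∂P - Real.log (∫ x, Real.exp (fn n x) ∂Q))
        atTop (𝓝 (∫ x, L x ∂P)) := by
      have := tendP.sub (tendQ.log one_ne_zero)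
      simpa using this
    refine le_of_tendsto tt (Eventually.of_forall fun n => ?_)
    exact le_ciSup hbdd ⟨fn n, hfn_meas n, ⟨(n:ℝ), hfn_bdd n⟩⟩
  · -- infinite KL case: both sides are 0
    rw [integral_undef hL]
    refine (Real.iSup_of_not_bddAbove ?_).symm
    rintro ⟨M, hM⟩
    -- negative part of L is integrable
    have hLneg_int : Integrable (fun x => max (-(L x)) 0) P := by
      refine (integrable_rnDeriv_smul_iff (f := fun x => max (-(L x)) 0) hPQ).mp ?_
      refine (integrable_const (2:ℝ)).mono'
        ((hgmeas.smul (hLmeas.neg.max measurable_const)).aestronglyMeasurable) ?_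
      refine Eventually.of_forall fun x => ?_
      rw [smul_eq_mul, Real.norm_eq_abs,
        abs_of_nonneg (mul_nonneg (hgnn x) (le_max_right _ _))]
      exact neg_log_bound (hgnn x)
    -- positive part of L is not integrable
    have hLp_meas : Measurable (fun x => max (L x) 0) := hLmeas.max measurable_const
    have hLpos_notint : ¬ Integrable (fun x => max (L x) 0) P := by
      intro hp
      apply hL
      have heq : L = fun x => max (L x) 0 - max (-(L x)) 0 := by
        funext x
        rw [max_zero_sub_max_neg_zero_eq_self]
      rw [heq]
      exact hp.sub hLneg_int
    have htop : ∫⁻ x, ENNReal.ofReal (max (L x) 0) ∂P = ⊤ := by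
      by_contra hfin
      apply hLpos_notint
      refine ⟨hLp_meas.aestronglyMeasurable, ?_⟩
      have hnn : 0 ≤ᶠ[ae P] fun x => max (L x) 0 :=
        Eventually.of_forall fun x => le_max_right _ _
      rw [hasFiniteIntegral_iff_ofReal hnn]
      exact lt_top_iff_ne_top.mpr hfin
    -- monotone convergence: truncations have arbitrarily large integral
    have hkey : ∀ b : ℝ, ∃ n : ℕ, b < ∫ x, min (n:ℝ) (max (L x) 0) ∂P := by
      intro b
      have hmcv : (⨆ n : ℕ, ∫⁻ x, ENNReal.ofReal (min (n:ℝ) (max (L x) 0)) ∂P) = ⊤ := by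
        rw [← lintegral_iSup (fun n => (measurable_const.min hLp_meas).ennreal_ofReal)
          (fun n m hnm x => ENNReal.ofReal_le_ofReal
            (min_le_min (Nat.cast_le.mpr hnm) le_rfl))]
        rw [← htop]
        refine lintegral_congr fun x => ?_
        refine le_antisymm (iSup_le fun n => ENNReal.ofReal_le_ofReal (min_le_right _ _)) ?_
        refine le_iSup_of_le ⌈max (L x) 0⌉₊ (le_of_eq ?_)
        rw [min_eq_right (Nat.le_ceil _)]
      have h1 : ENNReal.ofReal (max b 0)
          < ⨆ n : ℕ, ∫⁻ x, ENNReal.ofReal (min (n:ℝ) (max (L x) 0)) ∂P := by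
        rw [hmcv]; exact ENNReal.ofReal_lt_top
      obtain ⟨n, hn⟩ := lt_iSup_iff.mp h1
      refine ⟨n, ?_⟩
      have hfin : ∫⁻ x, ENNReal.ofReal (min (n:ℝ) (max (L x) 0)) ∂P ≠ ⊤ := by
        refine ne_top_of_le_ne_top ?_
          (lintegral_mono fun x => ENNReal.ofReal_le_ofReal (min_le_left _ _))
        rw [lintegral_const]
        simp [measure_univ]
      have heq : ∫ x, min (n:ℝ) (max (L x) 0) ∂P
          = (∫⁻ x, ENNReal.ofReal (min (n:ℝ) (max (L x) 0)) ∂P).toReal :=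
        integral_eq_lintegral_of_nonneg_ae
          (Eventually.of_forall fun x => le_min (Nat.cast_nonneg n) (le_max_right _ _))
          (measurable_const.min hLp_meas).aestronglyMeasurable
      rw [heq]
      calc b ≤ max b 0 := le_max_left _ _
      _ < _ := (ENNReal.ofReal_lt_iff_lt_toReal (le_max_right b 0) hfin).mp hn
    obtain ⟨n, hn⟩ := hkey (M + Real.log 2 + ∫ x, max (-(L x)) 0 ∂P)
    have hmin_int : Integrable (fun x => min (n:ℝ) (max (L x) 0)) P := by
      refine (integrable_const ((n:ℝ))).mono'
        (measurable_const.min hLp_meas).aestronglyMeasurable ?_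
      refine Eventually.of_forall fun x => ?_
      rw [Real.norm_eq_abs,
        abs_of_nonneg (le_min (Nat.cast_nonneg n) (le_max_right _ _))]
      exact min_le_left _ _
    have Isub : Integrable (fun x => min (n:ℝ) (max (L x) 0) - max (-(L x)) 0) P :=
      hmin_int.sub hLneg_int
    have hge : ∫ x, min (n:ℝ) (max (L x) 0) ∂P - ∫ x, max (-(L x)) 0 ∂P
        ≤ ∫ x, fn n x ∂P := by
      rw [← integral_sub hmin_int hLneg_int, integral_congr_ae (hfneq n)]
      exact integral_mono Isub (hclamp_int n) fun x => clamp_ge (Nat.cast_nonneg n)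
    have hlog : Real.log (∫ x, Real.exp (fn n x) ∂Q) ≤ Real.log 2 :=
      Real.log_le_log (hexp_pos n) (hexp_le2 n)
    have hmem : (∫ x, fn n x ∂P - Real.log (∫ x, Real.exp (fn n x) ∂Q)) ≤ M :=
      hM (Set.mem_range_self (⟨fn n, hfn_meas n, ⟨(n:ℝ), hfn_bdd n⟩⟩ :
        {f : X → ℝ // Measurable f ∧ ∃ C, ∀ x, |f x| ≤ C}))
    linarith
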